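/- With R and I as above, the ℤ-linear map φ: R → (ℤ/2)[t]/(t²−1) defined on monomials by φ(sⁿtᵐ) = t^{(n+nm+m) mod 2} is surjective and has kernel exactly I; hence φ induces an additive group isomorphism R/I ≅ (ℤ/2)[t]/(t²−1). -/

import Mathlib

noncomputable section

abbrev R2 : Type := AddMonoidAlgebra ℤ (ℤ × ℤ)

def mono (n m : ℤ) : R2 := AddMonoidAlgebra.single (n, m) 1

def Igen : Set R2 :=
  {x | ∃ n : ℤ, x = mono n n - mono n 0} ∪
  {x | ∃ n m : ℤ, x = mono n m + mono (-n) (m - n)} ∪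
  {x | ∃ n m : ℤ, x = mono n m + mono m n} ∪
  {x | ∃ n m : ℤ, x = mono n m * (1 - mono 0 1) ^ 2}

def I : AddSubgroup R2 := AddSubgroup.closure Igen

abbrev A2 : Type := AddMonoidAlgebra (ZMod 2) (ZMod 2)

def tA (k : ZMod 2) : A2 := AddMonoidAlgebra.single k 1

def Jf (n m : ℤ) : ZMod 2 := ((n + n * m + m : ℤ) : ZMod 2)

def phi : R2 →ₗ[ℤ] A2 :=
  Finsupp.lsum ℤ (fun p : ℤ × ℤ => LinearMap.toSpanSingleton ℤ A2 (tA (Jf p.1 p.2))) ∘ₗ (AddMonoidAlgebra.coeffLinearEquiv ℤ).toLinearMap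

def epsA : A2 →ₐ[ZMod 2] ZMod 2 := (AddMonoidAlgebra.lift (ZMod 2) (ZMod 2) (ZMod 2)) 1

def ev1 : LaurentPolynomial ℤ →ₗ[ℤ] ℤ := Finsupp.lsum ℤ (fun _ => LinearMap.id) ∘ₗ (AddMonoidAlgebra.coeffLinearEquiv ℤ).toLinearMap

def lder : LaurentPolynomial ℤ →ₗ[ℤ] LaurentPolynomial ℤ :=
  Finsupp.lsum ℤ (fun n : ℤ =>
    LinearMap.toSpanSingleton ℤ (LaurentPolynomial ℤ) ((n : ℤ) • LaurentPolynomial.T (n - 1))) ∘ₗ (AddMonoidAlgebra.coeffLinearEquiv ℤ).toLinearMap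

def ev2 : R2 →ₗ[ℤ] ZMod 2 :=
  Finsupp.lsum ℤ (fun _ : ℤ × ℤ => LinearMap.toSpanSingleton ℤ (ZMod 2) 1) ∘ₗ (AddMonoidAlgebra.coeffLinearEquiv ℤ).toLinearMap

/-!
Write `[n, m]` (`monoClass n m`) for the class of `sⁿtᵐ` in `R/I`. The exponent `n + nm + m` is
unchanged mod 2 by each relation, so `φ` kills `I`. Conversely, the relation `sⁿtᵐ(1 - t)²` makes
`m ↦ [n, m]` affine; combined with `[n, n] = [n, 0]` and `[m, n] = -[n, m]` this gives
`[n, m] = (J + 1) • [0, 0] + J • [1, 0]` with `J = n + nm + m`, where `[0, 0]` and `[1, 0]` have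
order dividing 2. So `[n, m]` depends only on `J mod 2`, and `tᵏ ↦ [k, 0]` is a left inverse of `φ`
modulo `I`.
-/

open AddMonoidAlgebra

section AffineSequences

variable {G : Type*} [AddCommGroup G]

lemma eq_add_zsmul_of_forall_sub_eq {f : ℤ → G} {d : G} (h : ∀ m, f (m + 1) - f m = d)
    (m : ℤ) : f m = f 0 + m • d := by
  induction m using Int.induction_on with
  | zero => simp
  | succ k ih => rw [← sub_add_cancel (f (k + 1)) (f k), h, ih, add_zsmul, one_zsmul]; abel
  | pred k ih =>
    have hk := h (-k - 1)
    rw [sub_add_cancel, ih] at hk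
    rw [sub_smul, one_smul, ← add_sub_assoc, sub_eq_iff_eq_add.mp hk, add_sub_cancel_left]

lemma eq_add_zsmul_of_add_add_two_eq {f : ℤ → G} (h : ∀ m, f m + f (m + 2) = 2 • f (m + 1))
    (m : ℤ) : f m = f 0 + m • (f 1 - f 0) := by
  have hconst : ∀ k, f (k + 1) - f k = f 1 - f 0 := by
    have hdiff : ∀ k, (f (k + 1 + 1) - f (k + 1)) - (f (k + 1) - f k) = 0 := fun k => by
      rw [add_assoc, one_add_one_eq_two]
      linear_combination (norm := module) h k
    simpa using eq_add_zsmul_of_forall_sub_eq (f := fun k => f (k + 1) - f k) hdiff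
  exact eq_add_zsmul_of_forall_sub_eq hconst m

lemma zsmul_eq_zsmul_of_two_dvd_sub {g : G} (hg : (2 : ℤ) • g = 0) {c d : ℤ} (h : 2 ∣ c - d) :
    c • g = d • g := by
  obtain ⟨k, hk⟩ := h
  rw [← sub_eq_zero, ← sub_smul, hk, mul_comm, mul_zsmul, hg, zsmul_zero]

end AffineSequences

lemma mono_mul_mono (n m a b : ℤ) : mono n m * mono a b = mono (n + a) (m + b) := by
  simp [mono, single_mul_single]

lemma single_eq_zsmul_mono (p : ℤ × ℤ) (c : ℤ) : (single p c : R2) = c • mono p.1 p.2 := by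
  simp [mono, smul_single]

lemma mono_mul_one_sub_sq (n m : ℤ) :
    mono n m * (1 - mono 0 1) ^ 2 = mono n m - 2 • mono n (m + 1) + mono n (m + 2) := by
  have h1 : mono n m * mono 0 1 = mono n (m + 1) := by simpa using mono_mul_mono n m 0 1
  have h2 : mono n m * mono 0 1 ^ 2 = mono n (m + 2) := by
    rw [pow_two, ← mul_assoc, h1, mono_mul_mono, add_zero, add_assoc, one_add_one_eq_two]
  rw [sub_sq, mul_one, one_pow, mul_add, mul_sub, mul_one, h2, mul_comm (2 : R2), ← mul_assoc,
    h1, mul_two, two_nsmul]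

lemma Jf_eq (n m : ℤ) : Jf n m = n + n * m + m := by
  simp [Jf]

lemma Jf_self (n : ℤ) : Jf n n = Jf n 0 := by
  simp only [Jf_eq]
  generalize (n : ZMod 2) = a
  revert a; decide

lemma Jf_neg_sub (n m : ℤ) : Jf (-n) (m - n) = Jf n m := by
  simp only [Jf_eq, Int.cast_neg, Int.cast_sub]
  generalize (n : ZMod 2) = a; generalize (m : ZMod 2) = b
  revert a b; decide

lemma Jf_comm (n m : ℤ) : Jf m n = Jf n m := by
  simp only [Jf_eq]; ring

lemma Jf_add_two (n m : ℤ) : Jf n (m + 2) = Jf n m := by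
  simp only [Jf_eq, Int.cast_add, Int.cast_ofNat]
  generalize (n : ZMod 2) = a; generalize (m : ZMod 2) = b
  revert a b; decide

lemma Jf_val_zero (k : ZMod 2) : Jf k.val 0 = k := by
  simp [Jf_eq]

lemma phi_mono (n m : ℤ) : phi (mono n m) = tA (Jf n m) := by
  simp [phi, mono, tA, coeffLinearEquiv]

lemma tA_add_self (k : ZMod 2) : tA k + tA k = 0 := by
  rw [tA, ← single_add]
  exact single_eq_zero.mpr (by decide)

lemma phi_eq_zero_of_mem_Igen {x : R2} (hx : x ∈ Igen) : phi x = 0 := by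
  rcases hx with ((⟨n, rfl⟩ | ⟨n, m, rfl⟩) | ⟨n, m, rfl⟩) | ⟨n, m, rfl⟩
  · rw [map_sub, phi_mono, phi_mono, Jf_self, sub_self]
  · rw [map_add, phi_mono, phi_mono, Jf_neg_sub, tA_add_self]
  · rw [map_add, phi_mono, phi_mono, Jf_comm, tA_add_self]
  · rw [mono_mul_one_sub_sq, map_add, map_sub, map_nsmul, phi_mono, phi_mono, phi_mono,
      Jf_add_two, two_nsmul, tA_add_self, sub_zero, tA_add_self]

lemma I_le_ker_phi : I ≤ phi.toAddMonoidHom.ker :=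
  (AddSubgroup.closure_le _).mpr fun _ hx => phi_eq_zero_of_mem_Igen hx

lemma phi_surjective : Function.Surjective phi := by
  intro y
  induction y using AddMonoidAlgebra.induction_linear with
  | zero => exact ⟨0, map_zero phi⟩
  | add y z hy hz =>
    obtain ⟨a, rfl⟩ := hy
    obtain ⟨b, rfl⟩ := hz
    exact ⟨a + b, map_add phi a b⟩
  | single k c =>
    refine ⟨(c.val : ℤ) • mono k.val 0, ?_⟩
    rw [map_zsmul, phi_mono, Jf_val_zero, tA, smul_single, zsmul_one]
    simp

def monoClass (n m : ℤ) : R2 ⧸ I := (mono n m : R2 ⧸ I)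

lemma mk_eq_zero_of_mem_Igen {x : R2} (hx : x ∈ Igen) : (x : R2 ⧸ I) = 0 :=
  (QuotientAddGroup.eq_zero_iff x).mpr (AddSubgroup.subset_closure hx)

lemma monoClass_self (n : ℤ) : monoClass n n = monoClass n 0 := by
  have h := mk_eq_zero_of_mem_Igen (Or.inl (Or.inl (Or.inl ⟨n, rfl⟩)))
  rwa [QuotientAddGroup.mk_sub, sub_eq_zero] at h

lemma monoClass_comm (n m : ℤ) : monoClass m n = -monoClass n m := by
  have h := mk_eq_zero_of_mem_Igen (Or.inl (Or.inr ⟨n, m, rfl⟩))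
  rw [QuotientAddGroup.mk_add] at h
  exact eq_neg_of_add_eq_zero_right h

lemma monoClass_add_monoClass_add_two (n m : ℤ) :
    monoClass n m + monoClass n (m + 2) = 2 • monoClass n (m + 1) := by
  have h := mk_eq_zero_of_mem_Igen (Or.inr ⟨n, m, rfl⟩)
  rwa [mono_mul_one_sub_sq, QuotientAddGroup.mk_add, QuotientAddGroup.mk_sub,
    QuotientAddGroup.mk_nsmul, sub_add_eq_add_sub, sub_eq_zero] at h

lemma two_zsmul_monoClass_zero (n : ℤ) : (2 : ℤ) • monoClass n 0 = 0 := by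
  rw [two_zsmul, ← monoClass_self]
  nth_rw 1 [monoClass_comm n n]
  exact neg_add_cancel _

lemma monoClass_eq_zsmul_add_zsmul (n m : ℤ) :
    monoClass n m = (n + n * m + m + 1) • monoClass 0 0 + (n + n * m + m) • monoClass 1 0 := by
  have haff := eq_add_zsmul_of_add_add_two_eq (monoClass_add_monoClass_add_two n) m
  have h1 : monoClass n 1 = -monoClass 1 0 := by
    rw [monoClass_comm 1 n, eq_add_zsmul_of_add_add_two_eq (monoClass_add_monoClass_add_two 1) n,
      monoClass_self, sub_self, zsmul_zero, add_zero]
  have h0 : monoClass n 0 = -(monoClass 0 0 + n • (-monoClass 1 0 - monoClass 0 0)) := by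
    rw [monoClass_comm 0 n, eq_add_zsmul_of_add_add_two_eq (monoClass_add_monoClass_add_two 0) n,
      monoClass_comm 1 0]
  have hcoeff : monoClass n m
      = ((1 - m) * (n - 1)) • monoClass 0 0 + ((1 - m) * n - m) • monoClass 1 0 := by
    rw [haff, h1, h0]; module
  rw [hcoeff]
  congr 1 <;> apply zsmul_eq_zsmul_of_two_dvd_sub (two_zsmul_monoClass_zero _)
  · exact ⟨-n * m - 1, by ring⟩
  · exact ⟨-n * m - m, by ring⟩

lemma monoClass_eq_of_Jf_eq {n m n' m' : ℤ} (h : Jf n m = Jf n' m') :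
    monoClass n m = monoClass n' m' := by
  have h2 : (2 : ℤ) ∣ (n + n * m + m) - (n' + n' * m' + m') :=
    mod_cast (ZMod.intCast_eq_intCast_iff_dvd_sub _ _ 2).mp h.symm
  rw [monoClass_eq_zsmul_add_zsmul n m, monoClass_eq_zsmul_add_zsmul n' m']
  congr 1 <;> apply zsmul_eq_zsmul_of_two_dvd_sub (two_zsmul_monoClass_zero _)
  · simpa only [add_sub_add_right_eq_sub] using h2
  · exact h2

def monoClassHom (k : ZMod 2) : ZMod 2 →+ R2 ⧸ I :=
  ZMod.lift 2 ⟨zmultiplesHom _ (monoClass k.val 0), by simpa using two_zsmul_monoClass_zero k.val⟩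

def psi : A2 →+ R2 ⧸ I :=
  (Finsupp.liftAddHom monoClassHom).comp coeffAddEquiv.toAddMonoidHom

lemma psi_tA (k : ZMod 2) : psi (tA k) = monoClass k.val 0 := by
  change Finsupp.liftAddHom monoClassHom (Finsupp.single k 1) = _
  rw [Finsupp.liftAddHom_apply_single, monoClassHom, ← Int.cast_one, ZMod.lift_coe]
  simp

lemma psi_phi (x : R2) : psi (phi x) = x := by
  induction x using AddMonoidAlgebra.induction_linear with
  | zero => simp
  | add x y hx hy => rw [map_add, map_add, hx, hy, QuotientAddGroup.mk_add]
  | single p c =>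
    rw [single_eq_zsmul_mono, map_zsmul, map_zsmul, phi_mono, psi_tA,
      monoClass_eq_of_Jf_eq (Jf_val_zero _), QuotientAddGroup.mk_zsmul, monoClass]

lemma mem_I_of_phi_eq_zero {x : R2} (hx : phi x = 0) : x ∈ I := by
  rw [← QuotientAddGroup.eq_zero_iff, ← psi_phi, hx, map_zero]

theorem stmt17 : Function.Surjective phi ∧ (∀ x : R2, phi x = 0 ↔ x ∈ I) ∧
    Nonempty ((R2 ⧸ I) ≃+ A2) := by
  have hker : ∀ x : R2, phi x = 0 ↔ x ∈ I := fun x => ⟨mem_I_of_phi_eq_zero, (I_le_ker_phi ·)⟩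
  refine ⟨phi_surjective, hker, ⟨?_⟩⟩
  have hI : I = phi.toAddMonoidHom.ker := AddSubgroup.ext fun x => (hker x).symm
  exact (QuotientAddGroup.quotientAddEquivOfEq hI).trans
    (QuotientAddGroup.quotientKerEquivOfSurjective _ phi_surjective)
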